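/- arXiv:math/0405277 — 3 statements merged into one kernel-verified Lean document; each statement's English description precedes it below -/
import Mathlib

section
/- Let c ≠ 0, k ≠ 0, and let a₁ : [0,∞) → ℝ be differentiable with a₁(t)² + 2ct ≠ 0 and a₁(t)² - 2ct ≠ 0 for all t. Define λ(t) = (4c/k)·a₁(t)/(a₁(t)² + 2ct). Then λ satisfies the differential equation a₁' = -(2ca₁λ + a₁³λ' + 2ct·a₁λ')/(λ(a₁² - 2ct)), i.e., equivalently λ(a₁² - 2ct)a₁' + 2ca₁λ + (a₁³ + 2cta₁)λ' = 0, identically in t. -/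
/-!
Writing `D = a₁² + 2ct`, the defining relation is `λ D = (4c/k) a₁`. Differentiating it gives
`λ' D + λ (2 a₁ a₁' + 2c) = (4c/k) a₁'`, and `a₁` times this relation minus `a₁'` times the
undifferentiated one is exactly the claimed identity. Where `D` vanishes, `λ = 0` by the
convention `x / 0 = 0` and the identity degenerates to `0 = 0`.
-/

theorem deriv_div_mul_add_div_mul {f g : ℝ → ℝ} {f' g' t : ℝ} (hf : HasDerivAt f f' t)
    (hg : HasDerivAt g g' t) (hgt : g t ≠ 0) :
    deriv (fun s => f s / g s) t * g t + f t / g t * g' = f' := by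
  rw [(hf.fun_div hg hgt).deriv]
  field_simp
  ring

theorem hasDerivAt_sq_add_const_mul {a : ℝ → ℝ} {a' t : ℝ} (ha : HasDerivAt a a' t) (c : ℝ) :
    HasDerivAt (fun s => a s ^ 2 + c * s) (2 * a t * a' + c) t :=
  ((ha.fun_pow 2).fun_add ((hasDerivAt_id' t).const_mul c)).congr_deriv (by norm_num)

theorem stmt_9_general (c k : ℝ) (a₁ lam : ℝ → ℝ)
    (hdiff : Differentiable ℝ a₁)
    (hlam : ∀ t : ℝ, lam t = (4 * c / k) * a₁ t / (a₁ t ^ 2 + 2 * c * t)) :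
    ∀ t : ℝ,
      lam t * (a₁ t ^ 2 - 2 * c * t) * deriv a₁ t + 2 * c * a₁ t * lam t +
        (a₁ t ^ 3 + 2 * c * t * a₁ t) * deriv lam t = 0 := by
  intro t
  by_cases hD : a₁ t ^ 2 + 2 * c * t = 0
  · have hcube : a₁ t ^ 3 + 2 * c * t * a₁ t = 0 := by linear_combination a₁ t * hD
    simp [hlam t, hD, hcube]
  have ha := (hdiff t).hasDerivAt
  have hrel : lam t * (a₁ t ^ 2 + 2 * c * t) = 4 * c / k * a₁ t := by
    rw [hlam t, div_mul_cancel₀ _ hD]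
  have hrel_deriv := deriv_div_mul_add_div_mul (ha.const_mul (4 * c / k))
    (hasDerivAt_sq_add_const_mul ha (2 * c)) hD
  rw [← funext hlam, ← hlam t] at hrel_deriv
  linear_combination a₁ t * hrel_deriv - deriv a₁ t * hrel

/-- λ = (4c/k)·a₁/(a₁²+2ct) is a prime integral of the Einstein ODE (17). -/
theorem stmt_9 (c k : ℝ) (hc : c ≠ 0) (hk : k ≠ 0) (a₁ lam : ℝ → ℝ)
    (hdiff : Differentiable ℝ a₁)
    (h1 : ∀ t : ℝ, a₁ t ^ 2 + 2 * c * t ≠ 0)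
    (h2 : ∀ t : ℝ, a₁ t ^ 2 - 2 * c * t ≠ 0)
    (hlam : ∀ t : ℝ, lam t = (4 * c / k) * a₁ t / (a₁ t ^ 2 + 2 * c * t)) :
    ∀ t : ℝ,
      lam t * (a₁ t ^ 2 - 2 * c * t) * deriv a₁ t + 2 * c * a₁ t * lam t +
        (a₁ t ^ 3 + 2 * c * t * a₁ t) * deriv lam t = 0 :=
  stmt_9_general c k a₁ lam hdiff hlam
end

section
/- Let c, k ≠ 0, B > 0, c > 0, a₁(t) = B + √(B²+2ct), and λ(t) = (4c/k)·a₁/(a₁²+2ct). If k > 0 then λ(t) > 0 and λ(t) + 2tλ'(t) > 0 for all t ≥ 0. -/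
/-!
Writing `s = √(B² + 2ct)`, one has `a₁² + 2ct = 2s(B + s)`, so `λ = (2c/k) / s` wherever
`B² + 2ct > 0`. For `λ = C (A + bt)^(-1/2)` the combination `λ + 2tλ'` equals
`C (A + bt - bt) (A + bt)^(-3/2) = C A (A + bt)^(-3/2)`, which here is `(2c/k) B² / s³ > 0`.
-/

open Real Filter Topology

lemma add_div_add_sq_add_eq {B s d : ℝ} (hs : s ≠ 0) (hBs : B + s ≠ 0)
    (hd : s ^ 2 = B ^ 2 + d) : (B + s) / ((B + s) ^ 2 + d) = 1 / (2 * s) := by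
  have hden : (B + s) ^ 2 + d = 2 * s * (B + s) := by linear_combination -hd
  rw [hden]
  field_simp

lemma mul_add_sqrt_div_eq_div_sqrt {B c x : ℝ} (C : ℝ) (hB : 0 < B) (hx : 0 < B ^ 2 + 2 * c * x) :
    2 * C * (B + √(B ^ 2 + 2 * c * x)) / ((B + √(B ^ 2 + 2 * c * x)) ^ 2 + 2 * c * x)
      = C / √(B ^ 2 + 2 * c * x) := by
  have hs : 0 < √(B ^ 2 + 2 * c * x) := sqrt_pos.2 hx
  rw [mul_div_assoc, add_div_add_sq_add_eq hs.ne' (by positivity) (sq_sqrt hx.le), mul_one_div, mul_div_mul_left _ _ two_ne_zero]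

lemma hasDerivAt_div_sqrt_affine (C : ℝ) {A b t : ℝ} (h : 0 < A + b * t) :
    HasDerivAt (fun x => C / √(A + b * x)) (-(C * b / 2) / √(A + b * t) ^ 3) t := by
  have hs : 0 < √(A + b * t) := sqrt_pos.2 h
  have hinner : HasDerivAt (fun x => A + b * x) b t := by
    simpa using ((hasDerivAt_id t).const_mul b).const_add A
  have hsqrt : HasDerivAt (fun x => √(A + b * x)) (1 / (2 * √(A + b * t)) * b) t :=
    (hasDerivAt_sqrt h.ne').comp t hinner
  refine ((hasDerivAt_const t C).div hsqrt hs.ne').congr_deriv ?_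
  field_simp
  ring

lemma div_sqrt_affine_add_two_mul_deriv (C : ℝ) {A b t : ℝ} (h : 0 < A + b * t) :
    C / √(A + b * t) + 2 * t * (-(C * b / 2) / √(A + b * t) ^ 3) = C * A / √(A + b * t) ^ 3 := by
  have hs : 0 < √(A + b * t) := sqrt_pos.2 h
  have hs2 : √(A + b * t) ^ 2 = A + b * t := sq_sqrt h.le
  field_simp
  linear_combination C * hs2

/-- Positivity of λ and λ + 2tλ' for the explicit example with c > 0, k > 0. -/
theorem stmt_17 (c B k : ℝ) (hc : 0 < c) (hB : 0 < B) (hk : 0 < k)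
    (a₁ lam : ℝ → ℝ)
    (ha₁ : ∀ t : ℝ, a₁ t = B + Real.sqrt (B ^ 2 + 2 * c * t))
    (hlam : ∀ t : ℝ, lam t = (4 * c / k) * a₁ t / (a₁ t ^ 2 + 2 * c * t)) :
    ∀ t : ℝ, 0 ≤ t → 0 < lam t ∧ 0 < lam t + 2 * t * deriv lam t := by
  intro t ht
  have hlam_eq : ∀ x, 0 < B ^ 2 + 2 * c * x → lam x = (2 * c / k) / √(B ^ 2 + 2 * c * x) := by
    intro x hx
    rw [hlam, ha₁, ← mul_add_sqrt_div_eq_div_sqrt _ hB hx]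
    ring
  have hpos : 0 < B ^ 2 + 2 * c * t := by positivity
  have hopen : IsOpen {x : ℝ | 0 < B ^ 2 + 2 * c * x} := isOpen_lt continuous_const (by fun_prop)
  have hlam_nhds : lam =ᶠ[𝓝 t] fun x => (2 * c / k) / √(B ^ 2 + 2 * c * x) :=
    eventually_of_mem (hopen.mem_nhds hpos) hlam_eq
  have hderiv := (hasDerivAt_div_sqrt_affine (2 * c / k) hpos).deriv
  rw [← hlam_nhds.deriv_eq] at hderiv
  rw [hlam_eq t hpos, hderiv, div_sqrt_affine_add_two_mul_deriv _ hpos]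
  have hs : 0 < √(B ^ 2 + 2 * c * t) := sqrt_pos.2 hpos
  constructor <;> positivity
end

section
/- Let a₁ > 0 be differentiable on [0,∞) with a₁ - 2ta₁' > 0 and a₁² - 2ct > 0, set b₁ = (a₁a₁' - c)/(a₁ - 2ta₁'), a₂ = 1/a₁, b₂ = -b₁/(a₁(a₁+2tb₁)). Then a₂ + 2tb₂ = (a₁ - 2ta₁')/(a₁² - 2ct) > 0, and (a₁ + 2tb₁)(a₂ + 2tb₂) = 1. -/
/-! The integrability formula gives `a₁ + 2tb₁ = (a₁² - 2ct) / (a₁ - 2ta₁')`, a quotient of two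
positive numbers, and the pair `(a₂, b₂)` is built so that `a₂ + 2tb₂ = (a₁ + 2tb₁)⁻¹`. -/

section

variable {K : Type*} [Field K]

lemma add_two_mul_integrable_coeff_eq {a a' c t : K} (hd : a - 2 * t * a' ≠ 0) :
    a + 2 * t * ((a * a' - c) / (a - 2 * t * a')) = (a ^ 2 - 2 * c * t) / (a - 2 * t * a') := by
  field_simp
  ring

lemma inv_add_two_mul_inverse_coeff_eq {a b t : K} (ha : a ≠ 0) (hs : a + 2 * t * b ≠ 0) :
    1 / a + 2 * t * (-b / (a * (a + 2 * t * b))) = (a + 2 * t * b)⁻¹ := by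
  field_simp
  ring

end

theorem stmt_19_general (a₁ a₂ b₁ b₂ : ℝ → ℝ) (c : ℝ)
    (hpos : ∀ t : ℝ, 0 ≤ t → 0 < a₁ t)
    (h1 : ∀ t : ℝ, 0 ≤ t → 0 < a₁ t - 2 * t * deriv a₁ t)
    (h2 : ∀ t : ℝ, 0 ≤ t → 0 < a₁ t ^ 2 - 2 * c * t)
    (hb₁ : ∀ t : ℝ, 0 ≤ t →
        b₁ t = (a₁ t * deriv a₁ t - c) / (a₁ t - 2 * t * deriv a₁ t))
    (ha₂ : ∀ t : ℝ, 0 ≤ t → a₂ t = 1 / a₁ t)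
    (hb₂ : ∀ t : ℝ, 0 ≤ t →
        b₂ t = -b₁ t / (a₁ t * (a₁ t + 2 * t * b₁ t))) :
    ∀ t : ℝ, 0 ≤ t →
      a₂ t + 2 * t * b₂ t =
          (a₁ t - 2 * t * deriv a₁ t) / (a₁ t ^ 2 - 2 * c * t) ∧
      0 < a₂ t + 2 * t * b₂ t ∧
      (a₁ t + 2 * t * b₁ t) * (a₂ t + 2 * t * b₂ t) = 1 := by
  intro t ht
  have hsum : a₁ t + 2 * t * b₁ t = (a₁ t ^ 2 - 2 * c * t) / (a₁ t - 2 * t * deriv a₁ t) := by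
    rw [hb₁ t ht, add_two_mul_integrable_coeff_eq (h1 t ht).ne']
  have hsum_pos : 0 < a₁ t + 2 * t * b₁ t := hsum ▸ div_pos (h2 t ht) (h1 t ht)
  have hinv : a₂ t + 2 * t * b₂ t = (a₁ t + 2 * t * b₁ t)⁻¹ := by
    rw [ha₂ t ht, hb₂ t ht, inv_add_two_mul_inverse_coeff_eq (hpos t ht).ne' hsum_pos.ne']
  refine ⟨by rw [hinv, hsum, inv_div], hinv ▸ inv_pos.mpr hsum_pos, ?_⟩
  rw [hinv, mul_inv_cancel₀ hsum_pos.ne']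

/-- Explicit formula and positivity of a₂ + 2tb₂ in the integrable case. -/
theorem stmt_19 (a₁ a₂ b₁ b₂ : ℝ → ℝ) (c : ℝ)
    (hdiff : Differentiable ℝ a₁)
    (hpos : ∀ t : ℝ, 0 ≤ t → 0 < a₁ t)
    (h1 : ∀ t : ℝ, 0 ≤ t → 0 < a₁ t - 2 * t * deriv a₁ t)
    (h2 : ∀ t : ℝ, 0 ≤ t → 0 < a₁ t ^ 2 - 2 * c * t)
    (hb₁ : ∀ t : ℝ, 0 ≤ t →
        b₁ t = (a₁ t * deriv a₁ t - c) / (a₁ t - 2 * t * deriv a₁ t))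
    (ha₂ : ∀ t : ℝ, 0 ≤ t → a₂ t = 1 / a₁ t)
    (hb₂ : ∀ t : ℝ, 0 ≤ t →
        b₂ t = -b₁ t / (a₁ t * (a₁ t + 2 * t * b₁ t))) :
    ∀ t : ℝ, 0 ≤ t →
      a₂ t + 2 * t * b₂ t =
          (a₁ t - 2 * t * deriv a₁ t) / (a₁ t ^ 2 - 2 * c * t) ∧
      0 < a₂ t + 2 * t * b₂ t ∧
      (a₁ t + 2 * t * b₁ t) * (a₂ t + 2 * t * b₂ t) = 1 :=
  stmt_19_general a₁ a₂ b₁ b₂ c hpos h1 h2 hb₁ ha₂ hb₂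
end
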